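/- For ℓ > 0 and 0 < ε ≤ ε_max(ℓ), the quantity w ≥ 0 defined by tanh w = sinh(ε)·sinh(ℓ/2)/tanh(½·arsinh(1/sinh ℓ)) satisfies w < 1. (Here sinh ε_max(ℓ) = tanh(1)·tanh(½·arsinh(1/sinh ℓ))/cosh(ℓ/2).) -/
import Mathlib

lemma tanh_strictMono : StrictMono Real.tanh := by
  intro a b hab
  rw [Real.tanh_eq_sinh_div_cosh, Real.tanh_eq_sinh_div_cosh,
    div_lt_div_iff₀ (Real.cosh_pos a) (Real.cosh_pos b)]
  have h : Real.sinh (a - b) < 0 := by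
    rw [← Real.sinh_zero]
    exact Real.sinh_lt_sinh.mpr (by linarith)
  rw [Real.sinh_sub] at h
  linarith

lemma tanh_lt_one (x : ℝ) : Real.tanh x < 1 := by
  rw [Real.tanh_eq_sinh_div_cosh, div_lt_one (Real.cosh_pos x)]
  rw [Real.sinh_eq, Real.cosh_eq]
  have := Real.exp_pos (-x)
  linarith

lemma tanh_pos {x : ℝ} (hx : 0 < x) : 0 < Real.tanh x := by
  have := tanh_strictMono hx
  rwa [Real.tanh_zero] at this

/-- The maximal strip width `ε_max`. -/
noncomputable def epsMax (ℓ : ℝ) : ℝ :=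
  Real.arsinh (Real.tanh 1 * Real.tanh (Real.arsinh (1 / Real.sinh ℓ) / 2) / Real.cosh (ℓ / 2))

theorem cylinder_width_lt_one (ℓ ε w : ℝ) (hℓ : 0 < ℓ) (hε₀ : 0 < ε) (hε₁ : ε ≤ epsMax ℓ)
    (hw₀ : 0 ≤ w)
    (hw : Real.tanh w =
      Real.sinh ε * Real.sinh (ℓ / 2) / Real.tanh (Real.arsinh (1 / Real.sinh ℓ) / 2)) :
    w < 1 := by
  set a := Real.arsinh (1 / Real.sinh ℓ) with ha
  have hsℓ : 0 < Real.sinh ℓ := by rw [← Real.sinh_zero]; exact Real.sinh_lt_sinh.mpr hℓ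
  have hapos : 0 < a := by
    rw [ha, ← Real.arsinh_zero]
    exact Real.arsinh_lt_arsinh.mpr (by positivity)
  have ht : 0 < Real.tanh (a / 2) := tanh_pos (by linarith)
  have hsε : Real.sinh ε ≤ Real.tanh 1 * Real.tanh (a / 2) / Real.cosh (ℓ / 2) := by
    have := Real.sinh_le_sinh.mpr hε₁
    rwa [epsMax, Real.sinh_arsinh] at this
  have h1 : 0 < Real.tanh 1 := tanh_pos one_pos
  have hsl2 : 0 < Real.sinh (ℓ / 2) := by
    rw [← Real.sinh_zero]; exact Real.sinh_lt_sinh.mpr (by linarith)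
  have hcl2 : 0 < Real.cosh (ℓ / 2) := Real.cosh_pos _
  have key : Real.tanh w < Real.tanh 1 := by
    rw [hw]
    have h2 : Real.sinh ε * Real.sinh (ℓ / 2) / Real.tanh (a / 2) ≤
        Real.tanh 1 * Real.tanh (ℓ / 2) := by
      rw [div_le_iff₀ ht, Real.tanh_eq_sinh_div_cosh (ℓ / 2)]
      calc Real.sinh ε * Real.sinh (ℓ / 2)
          ≤ Real.tanh 1 * Real.tanh (a / 2) / Real.cosh (ℓ / 2) * Real.sinh (ℓ / 2) := by
            exact mul_le_mul_of_nonneg_right hsε hsl2.le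
        _ = Real.tanh 1 * (Real.sinh (ℓ / 2) / Real.cosh (ℓ / 2)) * Real.tanh (a / 2) := by
            ring
    have h3 : Real.tanh 1 * Real.tanh (ℓ / 2) < Real.tanh 1 := by
      nlinarith [tanh_lt_one (ℓ / 2)]
    linarith
  exact tanh_strictMono.lt_iff_lt.mp key
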